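/- arXiv:1510.06084 — 3 statements merged into one kernel-verified Lean document; each statement's English description precedes it below -/
import Mathlib

section
/- For every integer n ≥ 0 and every real c > 1, for all t > 0 and x ∈ ℝ one has (|x|/√t)^n · Γ₀(t,x) ≤ √c · (c·n/((c−1)·√e))^{n/2} · Γ₀(c·t, x), where Γ₀(t,x) = (2πt)^{−1/2} exp(−x²/(2t)) is the one-dimensional Gaussian heat kernel. -/
/-!
Put `y = |x| / √t` and `a = 1 - 1/c`. Then `√c · Γ₀(ct, x) = Γ₀(t, x) · exp (a y² / 2)`, so the
claim reduces to `y ^ n · exp (-a y² / 2) ≤ M ^ (n / 2)` with `M = c n / ((c - 1) √e)`. Splitting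
the exponential into `n` equal factors, it suffices that `y · exp (-b y² / 2) ≤ (b e)^(-1/2)` with
`b = a / n`, which after squaring is `u e^{-u} ≤ e^{-1}` for `u = b y²`, i.e. `u ≤ e^{u-1}`.
This even yields `M` with `e` in place of `√e`.
-/

noncomputable def Gauss (t x : ℝ) : ℝ :=
  (Real.sqrt (2 * Real.pi * t))⁻¹ * Real.exp (-x ^ 2 / (2 * t))

open Real

lemma mul_exp_neg_mul_sq_le_sqrt {b : ℝ} (hb : 0 < b) (y : ℝ) :
    y * exp (-(b * y ^ 2) / 2) ≤ √((b * exp 1)⁻¹) := by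
  refine (le_abs_self _).trans (abs_le_sqrt ?_)
  calc (y * exp (-(b * y ^ 2) / 2)) ^ 2 = b⁻¹ * ((b * y ^ 2) * exp (-(b * y ^ 2))) := by
        rw [mul_pow, ← exp_nat_mul]; field_simp; ring_nf
    _ ≤ b⁻¹ * exp (-1) := by gcongr; exact mul_exp_neg_le_exp_neg_one _
    _ = (b * exp 1)⁻¹ := by rw [exp_neg, mul_inv]

lemma pow_mul_exp_neg_mul_sq_le {a : ℝ} (ha : 0 < a) (n : ℕ) {y : ℝ} (hy : 0 ≤ y) :
    y ^ n * exp (-(a * y ^ 2) / 2) ≤ (n / (a * exp 1)) ^ ((n : ℝ) / 2) := by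
  rcases n.eq_zero_or_pos with rfl | hn
  · simp only [pow_zero, one_mul, CharP.cast_eq_zero, zero_div, rpow_zero, exp_le_one_iff]
    have : 0 ≤ a * y ^ 2 := by positivity
    linarith
  have hn' : (0 : ℝ) < n := by exact_mod_cast hn
  have h := pow_le_pow_left₀ (by positivity) (mul_exp_neg_mul_sq_le_sqrt (div_pos ha hn') y) n
  calc y ^ n * exp (-(a * y ^ 2) / 2) = (y * exp (-(a / n * y ^ 2) / 2)) ^ n := by
        rw [mul_pow, ← exp_nat_mul]
        field_simp
    _ ≤ √((a / n * exp 1)⁻¹) ^ n := h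
    _ = (n / (a * exp 1)) ^ ((n : ℝ) / 2) := by
        rw [rpow_div_two_eq_sqrt _ (by positivity), rpow_natCast]
        field_simp

lemma gauss_nonneg (t x : ℝ) : 0 ≤ Gauss t x := by
  unfold Gauss
  positivity

lemma sqrt_mul_gauss_mul_left {c t : ℝ} (hc : 0 < c) (ht : 0 < t) (x : ℝ) :
    √c * Gauss (c * t) x = Gauss t x * exp ((1 - c⁻¹) * (x ^ 2 / t) / 2) := by
  unfold Gauss
  rw [show 2 * π * (c * t) = c * (2 * π * t) by ring, sqrt_mul hc.le, mul_inv, mul_assoc,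
    mul_assoc, mul_inv_cancel_left₀ (by positivity), mul_assoc, ← exp_add]
  congr 2
  field_simp
  ring

theorem stmt_0 (n : ℕ) (c : ℝ) (hc : 1 < c) (t x : ℝ) (ht : 0 < t) :
    (|x| / Real.sqrt t) ^ n * Gauss t x ≤
      Real.sqrt c * (c * n / ((c - 1) * Real.sqrt (Real.exp 1))) ^ ((n : ℝ) / 2) *
        Gauss (c * t) x := by
  have hc0 : 0 < c := by linarith
  have ha : 0 < 1 - c⁻¹ := sub_pos.mpr (inv_lt_one_of_one_lt₀ hc)
  set y := |x| / √t
  have hy2 : y ^ 2 = x ^ 2 / t := by rw [div_pow, sq_abs, sq_sqrt ht.le]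
  have hM : n / ((1 - c⁻¹) * exp 1) ≤ c * n / ((c - 1) * √(exp 1)) := by
    rw [show n / ((1 - c⁻¹) * exp 1) = c * n / ((c - 1) * exp 1) by field_simp]
    gcongr
    exact sqrt_le_self_iff.mpr (Or.inr (one_le_exp zero_le_one))
  calc y ^ n * Gauss t x
      = (y ^ n * exp (-((1 - c⁻¹) * y ^ 2) / 2)) *
          (Gauss t x * exp ((1 - c⁻¹) * (x ^ 2 / t) / 2)) := by
        rw [← hy2, mul_mul_mul_comm, ← exp_add, neg_div, neg_add_cancel, exp_zero, mul_one]
    _ ≤ (c * n / ((c - 1) * √(exp 1))) ^ ((n : ℝ) / 2) * (√c * Gauss (c * t) x) := by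
        rw [sqrt_mul_gauss_mul_left hc0 ht]
        gcongr
        · exact mul_nonneg (gauss_nonneg t x) (exp_pos _).le
        · exact (pow_mul_exp_neg_mul_sq_le ha n (by positivity)).trans
            (rpow_le_rpow (by positivity) hM (by positivity))
    _ = _ := by ring
end

section
/- For all σ > 0, τ > 0 and x, k ∈ ℝ, the Black–Scholes call price admits the representation u^{BS}(σ;τ,x,k) = (eˣ − e^k)⁺ + eˣ √(τ/(2π)) ∫₀^σ exp(−(1/2)·((x−k)/(w√τ) + w√τ/2)²) dw. -/
/-- Standard normal cumulative distribution function. -/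
noncomputable def normalCDF (x : ℝ) : ℝ :=
  (Real.sqrt (2 * Real.pi))⁻¹ * ∫ s in Set.Iic x, Real.exp (-s ^ 2 / 2)

/-- Black–Scholes call price `u^{BS}(σ; τ, x, k)` in log variables. -/
noncomputable def uBS (σ τ x k : ℝ) : ℝ :=
  Real.exp x * normalCDF ((x - k + σ ^ 2 * τ / 2) / (σ * Real.sqrt τ)) -
    Real.exp k * normalCDF ((x - k - σ ^ 2 * τ / 2) / (σ * Real.sqrt τ))

/-!
For `σ > 0` the price is smooth in the volatility, and since `eᵏ φ(d₋) = eˣ φ(d₊)` its vega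
collapses to `∂_σ u = eˣ √τ φ(d₊)`, which is the integrand. As `σ → 0⁺` both `d±` tend to
`+∞`, `-∞` or `0` according to the sign of `x - k`, so the price tends to `(eˣ - eᵏ)⁺`.
The fundamental theorem of calculus on `(0, σ]` gives the formula.
-/

open MeasureTheory Real Filter Set Topology

lemma exp_neg_sq_div_two (s : ℝ) : exp (-s ^ 2 / 2) = exp (-(1 / 2) * s ^ 2) := by
  ring_nf

lemma integrable_exp_neg_sq_div_two : Integrable fun s : ℝ => exp (-s ^ 2 / 2) := by
  simpa only [exp_neg_sq_div_two] using integrable_exp_neg_mul_sq (by norm_num : (0:ℝ) < 1 / 2)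

lemma integral_exp_neg_sq_div_two : ∫ s : ℝ, exp (-s ^ 2 / 2) = √(2 * π) := by
  simp only [exp_neg_sq_div_two, integral_gaussian]
  congr 1
  ring

lemma normalCDF_eq_add_intervalIntegral (y : ℝ) :
    normalCDF y = (√(2 * π))⁻¹ *
      ((∫ s in Iic 0, exp (-s ^ 2 / 2)) + ∫ s in 0..y, exp (-s ^ 2 / 2)) := by
  rw [normalCDF, ← intervalIntegral.integral_Iic_sub_Iic
    integrable_exp_neg_sq_div_two.integrableOn integrable_exp_neg_sq_div_two.integrableOn]
  ring

lemma hasDerivAt_normalCDF (y : ℝ) :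
    HasDerivAt normalCDF ((√(2 * π))⁻¹ * exp (-y ^ 2 / 2)) y := by
  have hFTC := (Continuous.integral_hasStrictDerivAt
    (f := fun s => exp (-s ^ 2 / 2)) (by fun_prop) 0 y).hasDerivAt
  exact ((hFTC.const_add _).const_mul _).congr_of_eventuallyEq
    (.of_forall normalCDF_eq_add_intervalIntegral)

@[fun_prop]
lemma continuous_normalCDF : Continuous normalCDF :=
  continuous_iff_continuousAt.2 fun y => (hasDerivAt_normalCDF y).continuousAt

lemma tendsto_normalCDF_atTop : Tendsto normalCDF atTop (𝓝 1) := by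
  have h := (aecover_Iic tendsto_id).integral_tendsto_of_countably_generated
    integrable_exp_neg_sq_div_two
  rw [integral_exp_neg_sq_div_two] at h
  rw [← inv_mul_cancel₀ (by positivity : √(2 * π) ≠ 0)]
  exact h.const_mul _

lemma tendsto_normalCDF_atBot : Tendsto normalCDF atBot (𝓝 0) := by
  rw [← mul_zero (√(2 * π))⁻¹]
  exact (tendsto_integral_Iic_zero tendsto_id).const_mul _

lemma tendsto_mul_inv_add_mul_atTop {a : ℝ} (ha : 0 < a) (b : ℝ) :
    Tendsto (fun v => a * v⁻¹ + b * v) (𝓝[>] 0) atTop :=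
  (tendsto_inv_nhdsGT_zero.const_mul_atTop ha).atTop_add
    (((continuous_const_mul b).tendsto' 0 0 (mul_zero b)).mono_left nhdsWithin_le_nhds)

lemma tendsto_mul_inv_add_mul_atBot {a : ℝ} (ha : a < 0) (b : ℝ) :
    Tendsto (fun v => a * v⁻¹ + b * v) (𝓝[>] 0) atBot :=
  (tendsto_inv_nhdsGT_zero.const_mul_atTop_of_neg ha).atBot_add
    (((continuous_const_mul b).tendsto' 0 0 (mul_zero b)).mono_left nhdsWithin_le_nhds)

lemma exp_neg_sq_sub_div_two (p q : ℝ) :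
    exp (-(p - q) ^ 2 / 2) = exp (2 * p * q) * exp (-(p + q) ^ 2 / 2) := by
  rw [← exp_add]
  ring_nf

lemma intervalIntegrable_exp_neg_mul_sq {g : ℝ → ℝ} (hg : Measurable g) {c : ℝ} (hc : 0 ≤ c)
    (a b : ℝ) : IntervalIntegrable (fun w => exp (-c * g w ^ 2)) volume a b := by
  refine (intervalIntegrable_const (c := (1 : ℝ))).mono_fun' (by fun_prop) ?_
  refine ae_of_all _ fun w => show ‖exp _‖ ≤ 1 from ?_
  rw [norm_of_nonneg (exp_pos _).le, exp_le_one_iff]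
  nlinarith [sq_nonneg (g w)]

section
variable {τ : ℝ} (x k : ℝ)

lemma uBS_eq_of_ne_zero (hτ : 0 < τ) {w : ℝ} (hw : w ≠ 0) :
    uBS w τ x k = exp x * normalCDF ((x - k) / √τ * w⁻¹ + √τ / 2 * w) -
      exp k * normalCDF ((x - k) / √τ * w⁻¹ - √τ / 2 * w) := by
  have hτ' : √τ ^ 2 = τ := sq_sqrt hτ.le
  have : √τ ≠ 0 := by positivity
  rw [uBS]
  congr 3 <;> field_simp <;> rw [hτ']

lemma hasDerivAt_uBS (hτ : 0 < τ) {w : ℝ} (hw : 0 < w) :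
    HasDerivAt (fun σ => uBS σ τ x k)
      (exp x * √(τ / (2 * π)) * exp (-(1 / 2) * ((x - k) / (w * √τ) + w * √τ / 2) ^ 2)) w := by
  set a := (x - k) / √τ
  set b := √τ / 2
  have hdp : HasDerivAt (fun v => a * v⁻¹ + b * v) (a * -(w ^ 2)⁻¹ + b) w :=
    ((hasDerivAt_inv hw.ne').const_mul a).add (by simpa using (hasDerivAt_id w).const_mul b)
  have hdm : HasDerivAt (fun v => a * v⁻¹ - b * v) (a * -(w ^ 2)⁻¹ - b) w :=
    ((hasDerivAt_inv hw.ne').const_mul a).sub (by simpa using (hasDerivAt_id w).const_mul b)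
  have hN := (((hasDerivAt_normalCDF _).comp w hdp).const_mul (exp x)).sub
    (((hasDerivAt_normalCDF _).comp w hdm).const_mul (exp k))
  -- `d₊² - d₋² = 2 (x - k)`
  have hφ : exp k * exp (-(a * w⁻¹ - b * w) ^ 2 / 2) =
      exp x * exp (-(a * w⁻¹ + b * w) ^ 2 / 2) := by
    have hpq : 2 * (a * w⁻¹) * (b * w) = x - k := by
      simp only [a, b]
      field_simp
    rw [exp_neg_sq_sub_div_two, hpq, ← mul_assoc, ← exp_add, add_sub_cancel]
  refine (hN.congr_of_eventuallyEq ?_).congr_deriv ?_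
  · filter_upwards [eventually_ne_nhds hw.ne'] with v hv using uBS_eq_of_ne_zero x k hτ hv
  have harg : (x - k) / (w * √τ) + w * √τ / 2 = a * w⁻¹ + b * w := by
    simp only [a, b]
    field_simp
  rw [harg, sqrt_div hτ.le, ← exp_neg_sq_div_two]
  linear_combination -(√(2 * π))⁻¹ * (a * -(w ^ 2)⁻¹ - b) * hφ

lemma tendsto_uBS_nhdsGT_zero (hτ : 0 < τ) :
    Tendsto (fun σ => uBS σ τ x k) (𝓝[>] 0) (𝓝 (max (exp x - exp k) 0)) := by
  refine Tendsto.congr' (eventually_nhdsWithin_of_forall fun w (hw : 0 < w) =>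
    (uBS_eq_of_ne_zero x k hτ hw.ne').symm) ?_
  -- write `d₋` as `a w⁻¹ + (-b) w`
  simp only [sub_eq_add_neg (_ * _⁻¹), ← neg_mul]
  rcases lt_trichotomy x k with hxk | rfl | hxk
  · have ha : (x - k) / √τ < 0 := div_neg_of_neg_of_pos (by linarith) (by positivity)
    rw [max_eq_right (by simpa using hxk.le)]
    have hp := tendsto_normalCDF_atBot.comp (tendsto_mul_inv_add_mul_atBot ha (√τ / 2))
    have hm := tendsto_normalCDF_atBot.comp (tendsto_mul_inv_add_mul_atBot ha (-(√τ / 2)))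
    simpa using (hp.const_mul (exp x)).sub (hm.const_mul (exp k))
  · have hcont : Continuous fun v => exp x * normalCDF (0 * v⁻¹ + √τ / 2 * v) -
        exp x * normalCDF (0 * v⁻¹ + -(√τ / 2) * v) := by
      simp only [zero_mul, zero_add]
      fun_prop
    simpa using (hcont.tendsto 0).mono_left nhdsWithin_le_nhds
  · have ha : 0 < (x - k) / √τ := div_pos (by linarith) (by positivity)
    rw [max_eq_left (by simpa using hxk.le)]
    have hp := tendsto_normalCDF_atTop.comp (tendsto_mul_inv_add_mul_atTop ha (√τ / 2))
    have hm := tendsto_normalCDF_atTop.comp (tendsto_mul_inv_add_mul_atTop ha (-(√τ / 2)))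
    simpa using (hp.const_mul (exp x)).sub (hm.const_mul (exp k))

end

theorem stmt_3 (σ τ x k : ℝ) (hσ : 0 < σ) (hτ : 0 < τ) :
    uBS σ τ x k =
      max (Real.exp x - Real.exp k) 0 +
        Real.exp x * Real.sqrt (τ / (2 * Real.pi)) *
          ∫ w in (0:ℝ)..σ,
            Real.exp (-(1 / 2) * ((x - k) / (w * Real.sqrt τ) + w * Real.sqrt τ / 2) ^ 2) := by
  have hint := intervalIntegrable_exp_neg_mul_sq (g := fun w => (x - k) / (w * √τ) + w * √τ / 2)
    (by fun_prop) (by norm_num : (0 : ℝ) ≤ 1 / 2) 0 σ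
  have hFTC := intervalIntegral.integral_eq_sub_of_hasDerivAt_of_tendsto hσ
    (fun w hw => hasDerivAt_uBS x k hτ hw.1) (hint.const_mul _) (tendsto_uBS_nhdsGT_zero x k hτ)
    ((hasDerivAt_uBS x k hτ hσ).continuousAt.tendsto.mono_left nhdsWithin_le_nhds)
  rw [intervalIntegral.integral_const_mul] at hFTC
  linarith
end

section
/- (Univariate Faà di Bruno via Bell polynomials) Let g : ℝ → ℝ and f : ℝ → ℝ be smooth. Then for every m ≥ 1, (d/dx)^m f(g(x)) = Σ_{h=1}^{m} f^{(h)}(g(x)) · B_{m,h}(g'(x), g''(x), …, g^{(m−h+1)}(x)), where B_{m,h} are the partial Bell polynomials. -/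
open Finset

/-- Partial (incomplete exponential) Bell polynomial `B_{m,h}(z₁, …, z_{m-h+1})`,
where `z i` gives the `i`-th argument. -/
noncomputable def Bell (m h : ℕ) (z : ℕ → ℝ) : ℝ :=
  ∑ j ∈ (Fintype.piFinset (fun _ : Fin (m - h + 1) => Finset.range (m + 1))).filter
      (fun j => (∑ i, j i) = h ∧ (∑ i, (i.1 + 1) * j i) = m),
    ((m.factorial : ℝ) / ∏ i, ((j i).factorial : ℝ)) *
      ∏ i, (z (i.1 + 1) / ((i.1 + 1).factorial : ℝ)) ^ j i


/-- increment at coordinate `w` -/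
def addE (w : ℕ) (k : ℕ → ℕ) : ℕ → ℕ := fun v => if v = w then k v + 1 else k v
/-- decrement at coordinate `w` -/
def subE (w : ℕ) (k : ℕ → ℕ) : ℕ → ℕ := fun v => if v = w then k v - 1 else k v

lemma addE_subE {w : ℕ} {k : ℕ → ℕ} (h : 1 ≤ k w) : addE w (subE w k) = k := by
  funext v; simp only [addE, subE]; split <;> rename_i hv <;> simp [hv] <;> omega

lemma subE_addE (w : ℕ) (k : ℕ → ℕ) : subE w (addE w k) = k := by
  funext v; simp only [addE, subE]; split <;> simp_all

lemma addE_apply_ne {w v : ℕ} (h : v ≠ w) (k : ℕ → ℕ) : addE w k v = k v := by simp [addE, h]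
lemma addE_apply_self (w : ℕ) (k : ℕ → ℕ) : addE w k w = k w + 1 := by simp [addE]
lemma subE_apply_ne {w v : ℕ} (h : v ≠ w) (k : ℕ → ℕ) : subE w k v = k v := by simp [subE, h]
lemma subE_apply_self (w : ℕ) (k : ℕ → ℕ) : subE w k w = k w - 1 := by simp [subE]

/-- weighted sum after increment -/
lemma sum_addE {T : Finset ℕ} {w : ℕ} (hw : w ∈ T) (c : ℕ → ℕ) (k : ℕ → ℕ) :
    ∑ v ∈ T, c v * addE w k v = c w + ∑ v ∈ T, c v * k v := by
  rw [← Finset.add_sum_erase T _ hw, ← Finset.add_sum_erase T (fun v => c v * k v) hw]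
  rw [addE_apply_self]
  have : ∑ v ∈ T.erase w, c v * addE w k v = ∑ v ∈ T.erase w, c v * k v := by
    refine Finset.sum_congr rfl fun v hv => ?_
    rw [addE_apply_ne (Finset.ne_of_mem_erase hv)]
  rw [this]; ring

lemma sum_subE {T : Finset ℕ} {w : ℕ} (hw : w ∈ T) (c : ℕ → ℕ) {k : ℕ → ℕ} (hk : 1 ≤ k w) :
    ∑ v ∈ T, c v * k v = c w + ∑ v ∈ T, c v * subE w k v := by
  conv_lhs => rw [← addE_subE hk]
  exact sum_addE hw c _

/-- The index finset for the multiplicity-vector form. -/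
def PP (m h : ℕ) : Finset (ℕ → ℕ) :=
  (Finset.piAntidiag (Finset.Icc 1 m) h).filter fun j => ∑ v ∈ Finset.Icc 1 m, v * j v = m

lemma mem_PP {m h : ℕ} {j : ℕ → ℕ} :
    j ∈ PP m h ↔ (∑ v ∈ Finset.Icc 1 m, j v = h) ∧ (∀ v, j v ≠ 0 → v ∈ Finset.Icc 1 m) ∧
      ∑ v ∈ Finset.Icc 1 m, v * j v = m := by
  simp [PP, Finset.mem_filter, Finset.mem_piAntidiag, and_assoc]

noncomputable def DD (T : Finset ℕ) (k : ℕ → ℕ) : ℝ :=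
  ∏ v ∈ T, (((k v).factorial : ℝ) * ((v.factorial : ℝ)) ^ k v)

lemma DD_pos (T : Finset ℕ) (k : ℕ → ℕ) : 0 < DD T k := by
  refine Finset.prod_pos fun v _ => ?_
  positivity

lemma DD_ne_zero (T : Finset ℕ) (k : ℕ → ℕ) : DD T k ≠ 0 := (DD_pos T k).ne'

noncomputable def CC (m : ℕ) (k : ℕ → ℕ) : ℝ := (m.factorial : ℝ) / DD (Finset.Icc 1 m) k

noncomputable def W (m h : ℕ) (a : ℕ → ℝ) : ℝ :=
  ∑ j ∈ PP m h, CC m j * ∏ v ∈ Finset.Icc 1 m, a v ^ j v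

noncomputable def Bump (m h : ℕ) (a : ℕ → ℝ) : ℝ :=
  ∑ j ∈ PP m h, CC m j *
    ∑ u ∈ Finset.Icc 1 m, (∏ v ∈ (Finset.Icc 1 m).erase u, a v ^ j v) *
      ((j u : ℝ) * a u ^ (j u - 1) * a (u + 1))

lemma Icc_succ_insert (m : ℕ) : Finset.Icc 1 (m + 1) = insert (m + 1) (Finset.Icc 1 m) := by
  ext v; simp [Finset.mem_Icc]; omega

lemma sum_ext {m : ℕ} {k : ℕ → ℕ} (hk : k (m + 1) = 0) (c : ℕ → ℕ) :
    ∑ v ∈ Finset.Icc 1 (m + 1), c v * k v = ∑ v ∈ Finset.Icc 1 m, c v * k v := by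
  rw [Icc_succ_insert, Finset.sum_insert (by simp), hk]; ring

lemma prod_ext {m : ℕ} {k : ℕ → ℕ} (hk : k (m + 1) = 0) (a : ℕ → ℝ) :
    ∏ v ∈ Finset.Icc 1 (m + 1), a v ^ k v = ∏ v ∈ Finset.Icc 1 m, a v ^ k v := by
  rw [Icc_succ_insert, Finset.prod_insert (by simp), hk, pow_zero, one_mul]

lemma DD_ext {m : ℕ} {k : ℕ → ℕ} (hk : k (m + 1) = 0) :
    DD (Finset.Icc 1 (m + 1)) k = DD (Finset.Icc 1 m) k := by
  rw [DD, Icc_succ_insert, Finset.prod_insert (by simp), hk, ← DD]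
  simp

lemma DD_addE {T : Finset ℕ} {w : ℕ} (hw : w ∈ T) (k : ℕ → ℕ) :
    DD T (addE w k) = ((k w : ℝ) + 1) * (w.factorial : ℝ) * DD T k := by
  rw [DD, DD, ← Finset.mul_prod_erase T _ hw,
    ← Finset.mul_prod_erase T (fun v => (((k v).factorial : ℝ) * ((v.factorial : ℝ)) ^ k v)) hw,
    addE_apply_self]
  have : ∏ v ∈ T.erase w, (((addE w k v).factorial : ℝ) * ((v.factorial : ℝ)) ^ addE w k v)
      = ∏ v ∈ T.erase w, (((k v).factorial : ℝ) * ((v.factorial : ℝ)) ^ k v) :=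
    Finset.prod_congr rfl fun v hv => by rw [addE_apply_ne (Finset.ne_of_mem_erase hv)]
  rw [this, Nat.factorial_succ, pow_succ]
  push_cast
  ring

lemma DD_subE {T : Finset ℕ} {w : ℕ} (hw : w ∈ T) {k : ℕ → ℕ} (hk : 1 ≤ k w) :
    DD T k = (k w : ℝ) * (w.factorial : ℝ) * DD T (subE w k) := by
  conv_lhs => rw [← addE_subE hk]
  rw [DD_addE hw, subE_apply_self]
  have : ((k w - 1 : ℕ) : ℝ) + 1 = (k w : ℝ) := by
    have := hk; push_cast [Nat.cast_sub hk]; ring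
  rw [this]

lemma prod_subE {T : Finset ℕ} {w : ℕ} (hw : w ∈ T) {k : ℕ → ℕ} (hk : 1 ≤ k w) (a : ℕ → ℝ) :
    ∏ v ∈ T, a v ^ subE w k v = a w ^ (k w - 1) * ∏ v ∈ T.erase w, a v ^ k v := by
  rw [← Finset.mul_prod_erase T _ hw, subE_apply_self]
  congr 1
  exact Finset.prod_congr rfl fun v hv => by rw [subE_apply_ne (Finset.ne_of_mem_erase hv)]

lemma prod_addE {T : Finset ℕ} {w : ℕ} (hw : w ∈ T) (k : ℕ → ℕ) (a : ℕ → ℝ) :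
    ∏ v ∈ T, a v ^ addE w k v = a w * ∏ v ∈ T, a v ^ k v := by
  rw [← Finset.mul_prod_erase T _ hw, ← Finset.mul_prod_erase T (fun v => a v ^ k v) hw,
    addE_apply_self, pow_succ]
  have : ∏ v ∈ T.erase w, a v ^ addE w k v = ∏ v ∈ T.erase w, a v ^ k v :=
    Finset.prod_congr rfl fun v hv => by rw [addE_apply_ne (Finset.ne_of_mem_erase hv)]
  rw [this]; ring

lemma PP_zero {m : ℕ} (hm : 1 ≤ m) : PP m 0 = ∅ := by
  ext j
  simp only [mem_PP, Finset.notMem_empty, iff_false, not_and]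
  intro h1 _
  rw [Finset.sum_eq_zero_iff] at h1
  intro h3
  rw [Finset.sum_eq_zero (fun v hv => by rw [h1 v hv, mul_zero])] at h3
  omega

lemma PP_gt {m h : ℕ} (hh : m < h) : PP m h = ∅ := by
  ext j
  simp only [mem_PP, Finset.notMem_empty, iff_false, not_and]
  intro h1 _ h3
  have : ∑ v ∈ Finset.Icc 1 m, j v ≤ ∑ v ∈ Finset.Icc 1 m, v * j v := by
    refine Finset.sum_le_sum fun v hv => ?_
    have : 1 ≤ v := (Finset.mem_Icc.1 hv).1
    nlinarith
  omega

lemma sum_Icc_one {M : Type*} [AddCommMonoid M] (n : ℕ) (F : ℕ → M) :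
    ∑ v ∈ Finset.Icc 1 n, F v = ∑ i ∈ Finset.range n, F (i + 1) := by
  refine Finset.sum_nbij' (fun v => v - 1) (fun i => i + 1) ?_ ?_ ?_ ?_ ?_ <;>
    intros a ha <;> simp only [Finset.mem_Icc, Finset.mem_range] at * <;> first
      | omega
      | (congr 1; omega)

lemma prod_Icc_one {M : Type*} [CommMonoid M] (n : ℕ) (F : ℕ → M) :
    ∏ v ∈ Finset.Icc 1 n, F v = ∏ i ∈ Finset.range n, F (i + 1) := by
  refine Finset.prod_nbij' (fun v => v - 1) (fun i => i + 1) ?_ ?_ ?_ ?_ ?_ <;>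
    intros a ha <;> simp only [Finset.mem_Icc, Finset.mem_range] at * <;> first
      | omega
      | (congr 1; omega)

lemma PP_support_le {m h : ℕ} (hh : 1 ≤ h) {j : ℕ → ℕ} (hj : j ∈ PP m h) {v : ℕ}
    (hv : m - h + 1 < v) : j v = 0 := by
  obtain ⟨hs, hsupp, hw⟩ := mem_PP.1 hj
  by_contra hne
  have hvm : v ∈ Finset.Icc 1 m := hsupp v hne
  have hvm' := Finset.mem_Icc.1 hvm
  have key : (v - 1) * j v ≤ ∑ w ∈ Finset.Icc 1 m, (w - 1) * j w :=
    Finset.single_le_sum (f := fun w => (w - 1) * j w) (fun _ _ => Nat.zero_le _) hvm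
  have expand : (∑ w ∈ Finset.Icc 1 m, (w - 1) * j w) + ∑ w ∈ Finset.Icc 1 m, j w
      = ∑ w ∈ Finset.Icc 1 m, w * j w := by
    rw [← Finset.sum_add_distrib]
    refine Finset.sum_congr rfl fun w hw' => ?_
    have h1 : 1 ≤ w := (Finset.mem_Icc.1 hw').1
    have : w - 1 + 1 = w := by omega
    calc (w - 1) * j w + j w = (w - 1 + 1) * j w := by ring
      _ = w * j w := by rw [this]
  have hlow : v - 1 ≤ (v - 1) * j v := Nat.le_mul_of_pos_right _ (by omega)
  omega

lemma PP_mem_le {m h : ℕ} {j : ℕ → ℕ} (hj : j ∈ PP m h) {v : ℕ} : j v ≤ h := by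
  obtain ⟨hs, hsupp, hw⟩ := mem_PP.1 hj
  by_cases hz : j v = 0
  · omega
  · exact hs ▸ Finset.single_le_sum (f := j) (fun _ _ => Nat.zero_le _) (hsupp v hz)

def Phi (n : ℕ) (j : Fin n → ℕ) : ℕ → ℕ :=
  fun v => if hv : 1 ≤ v ∧ v ≤ n then j ⟨v - 1, by omega⟩ else 0

lemma Phi_apply {n : ℕ} (j : Fin n → ℕ) (i : Fin n) : Phi n j (i.1 + 1) = j i := by
  have h : 1 ≤ i.1 + 1 ∧ i.1 + 1 ≤ n := ⟨by omega, by omega⟩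
  simp only [Phi, dif_pos h, Nat.add_sub_cancel]

lemma Phi_apply_zero {n : ℕ} (j : Fin n → ℕ) {v : ℕ} (hv : ¬(1 ≤ v ∧ v ≤ n)) :
    Phi n j v = 0 := dif_neg hv

lemma bridge_prod {M : Type*} [CommMonoid M] {n m : ℕ} (hnm : n ≤ m) (j : Fin n → ℕ)
    (F : ℕ → ℕ → M) (hF : ∀ v, F v 0 = 1) :
    ∏ v ∈ Finset.Icc 1 m, F v (Phi n j v) = ∏ i : Fin n, F (i.1 + 1) (j i) := by
  rw [← Finset.prod_subset (Finset.Icc_subset_Icc_right hnm)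
    (fun v hv hv' => by
      rw [Phi_apply_zero j (by simp only [Finset.mem_Icc] at hv hv'; omega), hF])]
  rw [prod_Icc_one]
  rw [← Fin.prod_univ_eq_prod_range (fun i => F (i + 1) (Phi n j (i + 1))) n]
  exact Finset.prod_congr rfl fun i _ => by rw [Phi_apply]

lemma bridge_sum {M : Type*} [AddCommMonoid M] {n m : ℕ} (hnm : n ≤ m) (j : Fin n → ℕ)
    (F : ℕ → ℕ → M) (hF : ∀ v, F v 0 = 0) :
    ∑ v ∈ Finset.Icc 1 m, F v (Phi n j v) = ∑ i : Fin n, F (i.1 + 1) (j i) := by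
  rw [← Finset.sum_subset (Finset.Icc_subset_Icc_right hnm)
    (fun v hv hv' => by
      rw [Phi_apply_zero j (by simp only [Finset.mem_Icc] at hv hv'; omega), hF])]
  rw [sum_Icc_one]
  rw [← Fin.sum_univ_eq_sum_range (fun i => F (i + 1) (Phi n j (i + 1))) n]
  exact Finset.sum_congr rfl fun i _ => by rw [Phi_apply]

lemma Phi_Psi {m h : ℕ} (hh : 1 ≤ h) {j' : ℕ → ℕ} (hj' : j' ∈ PP m h) :
    Phi (m - h + 1) (fun i => j' (i.1 + 1)) = j' := by
  obtain ⟨hs, hsupp, hw⟩ := mem_PP.1 hj'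
  funext v
  by_cases hv : 1 ≤ v ∧ v ≤ m - h + 1
  · simp only [Phi, dif_pos hv]
    congr 1
    omega
  · rw [Phi_apply_zero _ hv]
    push_neg at hv
    rcases Nat.lt_or_ge v 1 with h0 | h1
    · interval_cases v
      by_contra hne
      have := hsupp 0 (Ne.symm hne)
      simp [Finset.mem_Icc] at this
    · exact (PP_support_le hh hj' (hv h1)).symm

lemma Bell_eq_W {m h : ℕ} (hh : 1 ≤ h) (hhm : h ≤ m) (z : ℕ → ℝ) :
    Bell m h z = W m h z := by
  have hnm : m - h + 1 ≤ m := by omega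
  rw [Bell, W]
  refine Finset.sum_nbij' (Phi (m - h + 1)) (fun j' i => j' (i.1 + 1)) ?_ ?_ ?_ ?_ ?_
  · intro j hj
    simp only [Finset.mem_filter, Fintype.mem_piFinset, Finset.mem_range] at hj
    obtain ⟨hr, hs, hw⟩ := hj
    rw [mem_PP]
    refine ⟨?_, ?_, ?_⟩
    · rw [bridge_sum hnm j (fun _ k => k) (fun _ => rfl), hs]
    · intro v hv
      by_cases hv' : 1 ≤ v ∧ v ≤ m - h + 1
      · simp only [Finset.mem_Icc]; omega
      · exact absurd (Phi_apply_zero j hv') hv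
    · rw [bridge_sum hnm j (fun v k => v * k) (fun _ => mul_zero _), hw]
  · intro j' hj'
    obtain ⟨hs, hsupp, hw⟩ := mem_PP.1 hj'
    simp only [Finset.mem_filter, Fintype.mem_piFinset, Finset.mem_range]
    refine ⟨fun i => lt_of_le_of_lt (PP_mem_le hj') (by omega), ?_, ?_⟩
    · rw [← bridge_sum hnm (fun i => j' (i.1 + 1)) (fun _ k => k) (fun _ => rfl),
        Phi_Psi hh hj', hs]
    · rw [← bridge_sum hnm (fun i => j' (i.1 + 1)) (fun v k => v * k) (fun _ => mul_zero _),
        Phi_Psi hh hj', hw]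
  · intro j _
    funext i
    exact Phi_apply j i
  · intro j' hj'
    exact Phi_Psi hh hj'
  · intro j hj
    rw [CC, DD, bridge_prod hnm j
      (fun v k => ((k.factorial : ℝ) * ((v.factorial : ℝ)) ^ k)) (fun v => by simp),
      bridge_prod hnm j (fun v k => z v ^ k) (fun v => pow_zero _)]
    simp only [div_pow, Finset.prod_div_distrib, Finset.prod_mul_distrib, div_eq_mul_inv,
      mul_inv, mul_pow, inv_pow, Finset.prod_inv_distrib]
    ring

lemma pair_le_sum {T : Finset ℕ} {v w : ℕ} (hvw : v ≠ w) (hv : v ∈ T) (hw : w ∈ T)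
    (F : ℕ → ℕ) : F v + F w ≤ ∑ x ∈ T, F x := by
  rw [← Finset.sum_pair hvw]
  refine Finset.sum_le_sum_of_subset ?_
  intro x hx
  simp only [Finset.mem_insert, Finset.mem_singleton] at hx
  rcases hx with rfl | rfl <;> assumption

lemma Icc_one_split (m : ℕ) : Finset.Icc 1 (m + 1) = insert 1 (Finset.Icc 2 (m + 1)) := by
  ext v; simp [Finset.mem_Icc]; omega

lemma sum_shift {M : Type*} [AddCommMonoid M] (m : ℕ) (F : ℕ → M) :
    ∑ v ∈ Finset.Icc 2 (m + 1), F v = ∑ u ∈ Finset.Icc 1 m, F (u + 1) := by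
  refine Finset.sum_nbij' (fun v => v - 1) (fun u => u + 1) ?_ ?_ ?_ ?_ ?_ <;>
    intros a ha <;> simp only [Finset.mem_Icc] at * <;> first
      | omega
      | (congr 1; omega)

lemma sum_addE' {T : Finset ℕ} {w : ℕ} (hw : w ∈ T) (k : ℕ → ℕ) :
    ∑ v ∈ T, addE w k v = 1 + ∑ v ∈ T, k v := by
  have := sum_addE hw (fun _ => 1) k
  simpa using this

lemma sum_subE' {T : Finset ℕ} {w : ℕ} (hw : w ∈ T) {k : ℕ → ℕ} (hk : 1 ≤ k w) :
    ∑ v ∈ T, k v = 1 + ∑ v ∈ T, subE w k v := by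
  have := sum_subE hw (fun _ => 1) hk
  simpa using this

lemma sum_ext' {m : ℕ} {k : ℕ → ℕ} (hk : k (m + 1) = 0) :
    ∑ v ∈ Finset.Icc 1 (m + 1), k v = ∑ v ∈ Finset.Icc 1 m, k v := by
  have := sum_ext hk (fun _ => 1)
  simpa using this

lemma prod_erase_ext {m u : ℕ} (hu : u ≤ m) {k : ℕ → ℕ} (hk : k (m + 1) = 0) (a : ℕ → ℝ) :
    ∏ v ∈ (Finset.Icc 1 (m + 1)).erase u, a v ^ k v
      = ∏ v ∈ (Finset.Icc 1 m).erase u, a v ^ k v := by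
  have hset : (Finset.Icc 1 (m + 1)).erase u = insert (m + 1) ((Finset.Icc 1 m).erase u) := by
    ext v; simp only [Finset.mem_erase, Finset.mem_insert, Finset.mem_Icc]; omega
  rw [hset, Finset.prod_insert (by simp [Finset.mem_erase, Finset.mem_Icc]), hk, pow_zero,
    one_mul]

lemma j_top_eq_zero {m h : ℕ} {j : ℕ → ℕ} (hj : j ∈ PP m h) : j (m + 1) = 0 := by
  obtain ⟨_, hsupp, _⟩ := mem_PP.1 hj
  by_contra hne
  have := hsupp _ hne
  simp [Finset.mem_Icc] at this

set_option maxHeartbeats 2000000 in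
lemma top_eq_zero_of_lower {m h u : ℕ} (hm : 1 ≤ m) (hu : 1 ≤ u) (hum : u ≤ m)
    {j' : ℕ → ℕ} (hj' : j' ∈ PP (m + 1) h) (hne : 1 ≤ j' u) : j' (m + 1) = 0 := by
  obtain ⟨hs, hsupp, hw⟩ := mem_PP.1 hj'
  by_contra hne'
  have hp := pair_le_sum (v := u) (w := m + 1) (by omega)
    (Finset.mem_Icc.2 ⟨hu, by omega⟩) (Finset.mem_Icc.2 ⟨by omega, le_rfl⟩)
    (fun v => v * j' v)
  rw [hw] at hp
  have h1 : u ≤ u * j' u := Nat.le_mul_of_pos_right _ (by omega)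
  have h2 : m + 1 ≤ (m + 1) * j' (m + 1) := Nat.le_mul_of_pos_right _ (by omega)
  omega

lemma X_eq {m h : ℕ} (hm : 1 ≤ m) (hh : 1 ≤ h) (a : ℕ → ℝ) :
    ∑ j' ∈ PP (m + 1) h, (j' 1 : ℝ) * (CC (m + 1) j' * ∏ v ∈ Finset.Icc 1 (m + 1), a v ^ j' v)
      = (m + 1 : ℝ) * (a 1 * W m (h - 1) a) := by
  have h1S : (1 : ℕ) ∈ Finset.Icc 1 (m + 1) := by simp
  rw [← Finset.sum_filter_of_ne (p := fun j' => j' 1 ≠ 0)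
    (fun j' _ hne h0 => hne (by rw [h0]; push_cast; ring))]
  rw [W, Finset.mul_sum, Finset.mul_sum]
  refine Finset.sum_nbij' (subE 1) (addE 1) ?_ ?_ ?_ ?_ ?_
  · -- forward membership
    intro j' hj'
    rw [Finset.mem_filter] at hj'
    obtain ⟨hj', hne⟩ := hj'
    obtain ⟨hs, hsupp, hw⟩ := mem_PP.1 hj'
    have hk1 : 1 ≤ j' 1 := Nat.one_le_iff_ne_zero.2 hne
    have htop : j' (m + 1) = 0 := top_eq_zero_of_lower hm le_rfl hm hj' hk1
    have hktop : subE 1 j' (m + 1) = 0 := by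
      rw [subE_apply_ne (by omega)]; exact htop
    rw [mem_PP]
    refine ⟨?_, ?_, ?_⟩
    · have := sum_subE' h1S hk1
      have h2 := sum_ext' (m := m) hktop
      omega
    · intro v hv
      have hvS' : v ∈ Finset.Icc 1 (m + 1) := by
        refine hsupp v ?_
        intro h0
        exact hv (by simp [subE, h0])
      simp only [Finset.mem_Icc] at hvS' ⊢
      refine ⟨hvS'.1, ?_⟩
      rcases Nat.lt_or_ge v (m + 1) with hlt | hge
      · omega
      · exfalso
        have hveq : v = m + 1 := by omega
        rw [hveq] at hv
        exact hv hktop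
    · have := sum_subE h1S (fun v => v) hk1
      have h2 := sum_ext hktop (fun v => v)
      omega
  · -- backward membership
    intro j hj
    obtain ⟨hs, hsupp, hw⟩ := mem_PP.1 hj
    have htop : j (m + 1) = 0 := j_top_eq_zero hj
    have haddtop : addE 1 j (m + 1) = 0 := by rw [addE_apply_ne (by omega)]; exact htop
    rw [Finset.mem_filter, mem_PP]
    have hsub : ∀ c : ℕ → ℕ, ∑ v ∈ Finset.Icc 1 (m + 1), c v * j v
        = ∑ v ∈ Finset.Icc 1 m, c v * j v := fun c => sum_ext htop c
    refine ⟨⟨?_, ?_, ?_⟩, by simp [addE]⟩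
    · have := sum_addE' h1S j
      have h2 := sum_ext' (m := m) htop
      omega
    · intro v hv
      by_cases hv1 : v = 1
      · simp only [hv1, Finset.mem_Icc]
        omega
      · rw [addE_apply_ne hv1] at hv
        have := Finset.mem_Icc.1 (hsupp v hv)
        simp only [Finset.mem_Icc]; omega
    · have := sum_addE h1S (fun v => v) j
      have h2 := sum_ext htop (fun v => v)
      omega
  · intro j' hj'
    rw [Finset.mem_filter] at hj'
    exact addE_subE (Nat.one_le_iff_ne_zero.2 hj'.2)
  · intro j _
    exact subE_addE 1 j
  · -- term equality
    intro j' hj'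
    rw [Finset.mem_filter] at hj'
    obtain ⟨hj', hne⟩ := hj'
    have hk1 : 1 ≤ j' 1 := Nat.one_le_iff_ne_zero.2 hne
    have htop : j' (m + 1) = 0 := top_eq_zero_of_lower hm le_rfl hm hj' hk1
    have hktop : subE 1 j' (m + 1) = 0 := by rw [subE_apply_ne (by omega)]; exact htop
    have hDD : DD (Finset.Icc 1 (m + 1)) j'
        = (j' 1 : ℝ) * (1 : ℕ).factorial * DD (Finset.Icc 1 (m + 1)) (subE 1 j') :=
      DD_subE h1S hk1
    have hDD2 : DD (Finset.Icc 1 (m + 1)) (subE 1 j') = DD (Finset.Icc 1 m) (subE 1 j') :=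
      DD_ext hktop
    have hprod : ∏ v ∈ Finset.Icc 1 (m + 1), a v ^ j' v
        = a 1 * ∏ v ∈ Finset.Icc 1 m, a v ^ subE 1 j' v := by
      conv_lhs => rw [← addE_subE hk1]
      rw [prod_addE h1S, prod_ext hktop]
    rw [CC, CC, hDD, hDD2, hprod]
    have hd := DD_ne_zero (Finset.Icc 1 m) (subE 1 j')
    have hj1 : (j' 1 : ℝ) ≠ 0 := Nat.cast_ne_zero.2 hne
    rw [Nat.factorial_succ m]
    push_cast
    field_simp
    ring

lemma bump_top_eq_zero {m h u : ℕ} (hm : 1 ≤ m) (hu : 1 ≤ u) (hum : u ≤ m) {j' : ℕ → ℕ}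
    (hj' : j' ∈ PP (m + 1) h) (hne : 1 ≤ j' (u + 1)) :
    addE u (subE (u + 1) j') (m + 1) = 0 := by
  obtain ⟨hs, hsupp, hw⟩ := mem_PP.1 hj'
  rw [addE_apply_ne (by omega)]
  rcases Nat.lt_or_ge u m with hlt | hge
  · rw [subE_apply_ne (by omega)]
    exact top_eq_zero_of_lower hm (by omega) (by omega) hj' hne
  · rw [show u + 1 = m + 1 by omega, subE_apply_self]
    have hsingle : (m + 1) * j' (m + 1) ≤ m + 1 := by
      conv_rhs => rw [← hw]
      exact Finset.single_le_sum (f := fun v => v * j' v) (fun _ _ => Nat.zero_le _)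
        (Finset.mem_Icc.2 ⟨by omega, by omega⟩)
    by_contra hne'
    have h2 : (m + 1) * 2 ≤ (m + 1) * j' (m + 1) := Nat.mul_le_mul_left _ (by omega)
    omega

set_option maxHeartbeats 3000000 in
lemma Y_eq {m h : ℕ} (hm : 1 ≤ m) (hh : 1 ≤ h) (a : ℕ → ℝ) :
    ∑ j' ∈ PP (m + 1) h, ∑ u ∈ Finset.Icc 1 m,
        (((u + 1) * j' (u + 1) : ℕ) : ℝ) *
          (CC (m + 1) j' * ∏ v ∈ Finset.Icc 1 (m + 1), a v ^ j' v)
      = (m + 1 : ℝ) * Bump m h a := by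
  have step1 : ∑ j' ∈ PP (m + 1) h, ∑ u ∈ Finset.Icc 1 m,
        (((u + 1) * j' (u + 1) : ℕ) : ℝ) *
          (CC (m + 1) j' * ∏ v ∈ Finset.Icc 1 (m + 1), a v ^ j' v)
      = ∑ p ∈ ((PP (m + 1) h ×ˢ Finset.Icc 1 m).filter (fun p => p.1 (p.2 + 1) ≠ 0)),
          (((p.2 + 1) * p.1 (p.2 + 1) : ℕ) : ℝ) *
            (CC (m + 1) p.1 * ∏ v ∈ Finset.Icc 1 (m + 1), a v ^ p.1 v) := by
    have e : ∑ p ∈ ((PP (m + 1) h ×ˢ Finset.Icc 1 m).filter (fun p => p.1 (p.2 + 1) ≠ 0)),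
          (((p.2 + 1) * p.1 (p.2 + 1) : ℕ) : ℝ) *
            (CC (m + 1) p.1 * ∏ v ∈ Finset.Icc 1 (m + 1), a v ^ p.1 v)
        = ∑ p ∈ (PP (m + 1) h ×ˢ Finset.Icc 1 m),
          (((p.2 + 1) * p.1 (p.2 + 1) : ℕ) : ℝ) *
            (CC (m + 1) p.1 * ∏ v ∈ Finset.Icc 1 (m + 1), a v ^ p.1 v) :=
      Finset.sum_filter_of_ne (fun p _ hne h0 => hne (by rw [h0]; push_cast; ring))
    rw [e]
    exact (Finset.sum_product' _ _ _).symm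
  have step2 : (m + 1 : ℝ) * Bump m h a
      = ∑ q ∈ ((PP m h ×ˢ Finset.Icc 1 m).filter (fun q => q.1 q.2 ≠ 0)),
          (m + 1 : ℝ) * (CC m q.1 * ((∏ v ∈ (Finset.Icc 1 m).erase q.2, a v ^ q.1 v) *
            ((q.1 q.2 : ℝ) * a q.2 ^ (q.1 q.2 - 1) * a (q.2 + 1)))) := by
    have e : ∑ q ∈ ((PP m h ×ˢ Finset.Icc 1 m).filter (fun q => q.1 q.2 ≠ 0)),
          (m + 1 : ℝ) * (CC m q.1 * ((∏ v ∈ (Finset.Icc 1 m).erase q.2, a v ^ q.1 v) *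
            ((q.1 q.2 : ℝ) * a q.2 ^ (q.1 q.2 - 1) * a (q.2 + 1))))
        = ∑ q ∈ (PP m h ×ˢ Finset.Icc 1 m),
          (m + 1 : ℝ) * (CC m q.1 * ((∏ v ∈ (Finset.Icc 1 m).erase q.2, a v ^ q.1 v) *
            ((q.1 q.2 : ℝ) * a q.2 ^ (q.1 q.2 - 1) * a (q.2 + 1)))) :=
      Finset.sum_filter_of_ne (fun q _ hne h0 => hne (by rw [h0]; push_cast; ring))
    rw [e, Bump, Finset.mul_sum]
    have e2 : ∑ j ∈ PP m h, (m + 1 : ℝ) * (CC m j *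
          ∑ u ∈ Finset.Icc 1 m, (∏ v ∈ (Finset.Icc 1 m).erase u, a v ^ j v) *
            ((j u : ℝ) * a u ^ (j u - 1) * a (u + 1)))
        = ∑ j ∈ PP m h, ∑ u ∈ Finset.Icc 1 m,
          (m + 1 : ℝ) * (CC m j * ((∏ v ∈ (Finset.Icc 1 m).erase u, a v ^ j v) *
            ((j u : ℝ) * a u ^ (j u - 1) * a (u + 1)))) := by
      refine Finset.sum_congr rfl fun j _ => ?_
      rw [Finset.mul_sum, Finset.mul_sum]
    rw [e2]
    exact (Finset.sum_product' _ _ _).symm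
  rw [step1, step2]
  refine Finset.sum_nbij' (fun p => (addE p.2 (subE (p.2 + 1) p.1), p.2))
    (fun q => (addE (q.2 + 1) (subE q.2 q.1), q.2)) ?_ ?_ ?_ ?_ ?_
  · -- forward membership
    rintro ⟨j', u⟩ hp
    simp only [Finset.mem_filter, Finset.mem_product] at hp ⊢
    obtain ⟨⟨hj', huS⟩, hne⟩ := hp
    obtain ⟨hs, hsupp, hw⟩ := mem_PP.1 hj'
    have hu := Finset.mem_Icc.1 huS
    have hj'u1 : 1 ≤ j' (u + 1) := Nat.one_le_iff_ne_zero.2 hne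
    have huS' : u ∈ Finset.Icc 1 (m + 1) := Finset.mem_Icc.2 ⟨hu.1, by omega⟩
    have hu1S' : u + 1 ∈ Finset.Icc 1 (m + 1) := Finset.mem_Icc.2 ⟨by omega, by omega⟩
    have htop' := bump_top_eq_zero hm hu.1 hu.2 hj' hj'u1
    refine ⟨⟨mem_PP.2 ⟨?_, ?_, ?_⟩, huS⟩, ?_⟩
    · have e1 := sum_addE' huS' (subE (u + 1) j')
      have e2 := sum_subE' hu1S' hj'u1
      have e3 := sum_ext' (m := m) htop'
      omega
    · intro v hv
      have hvne : v ≠ m + 1 := fun hveq => hv (hveq ▸ htop')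
      by_cases hvu : v = u
      · subst hvu; exact huS
      · rw [addE_apply_ne hvu] at hv
        have : j' v ≠ 0 := by
          intro h0
          by_cases hvu1 : v = u + 1
          · subst hvu1; rw [subE_apply_self, h0] at hv; exact hv rfl
          · rw [subE_apply_ne hvu1] at hv; exact hv h0
        have := Finset.mem_Icc.1 (hsupp v this)
        exact Finset.mem_Icc.2 ⟨this.1, by omega⟩
    · have e1 := sum_addE huS' (fun v => v) (subE (u + 1) j')
      have e2 := sum_subE hu1S' (fun v => v) hj'u1
      have e3 := sum_ext htop' (fun v => v)
      omega
    · rw [addE_apply_self]; omega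
  · -- backward membership
    rintro ⟨j, u⟩ hq
    simp only [Finset.mem_filter, Finset.mem_product] at hq ⊢
    obtain ⟨⟨hj, huS⟩, hne⟩ := hq
    obtain ⟨hs, hsupp, hw⟩ := mem_PP.1 hj
    have hu := Finset.mem_Icc.1 huS
    have hju : 1 ≤ j u := Nat.one_le_iff_ne_zero.2 hne
    have htop : j (m + 1) = 0 := j_top_eq_zero hj
    have huS' : u ∈ Finset.Icc 1 (m + 1) := Finset.mem_Icc.2 ⟨hu.1, by omega⟩
    have hu1S' : u + 1 ∈ Finset.Icc 1 (m + 1) := Finset.mem_Icc.2 ⟨by omega, by omega⟩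
    refine ⟨⟨mem_PP.2 ⟨?_, ?_, ?_⟩, huS⟩, ?_⟩
    · have e1 := sum_addE' hu1S' (subE u j)
      have e2 := sum_subE' huS' hju
      have e3 := sum_ext' (m := m) htop
      omega
    · intro v hv
      by_cases hvu1 : v = u + 1
      · subst hvu1; exact hu1S'
      · rw [addE_apply_ne hvu1] at hv
        have : j v ≠ 0 := by
          by_cases hvu : v = u
          · subst hvu; rw [subE_apply_self] at hv; omega
          · rwa [subE_apply_ne hvu] at hv
        have := Finset.mem_Icc.1 (hsupp v this)
        exact Finset.mem_Icc.2 ⟨this.1, by omega⟩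
    · have e1 := sum_addE hu1S' (fun v => v) (subE u j)
      have e2 := sum_subE huS' (fun v => v) hju
      have e3 := sum_ext htop (fun v => v)
      omega
    · rw [addE_apply_self]; omega
  · -- left inverse
    rintro ⟨j', u⟩ hp
    simp only [Finset.mem_filter, Finset.mem_product] at hp
    have hj'u1 : 1 ≤ j' (u + 1) := Nat.one_le_iff_ne_zero.2 hp.2
    simp only
    rw [subE_addE, addE_subE hj'u1]
  · -- right inverse
    rintro ⟨j, u⟩ hq
    simp only [Finset.mem_filter, Finset.mem_product] at hq
    have hju : 1 ≤ j u := Nat.one_le_iff_ne_zero.2 hq.2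
    simp only
    rw [subE_addE, addE_subE hju]
  · -- term equality
    rintro ⟨j', u⟩ hp
    simp only [Finset.mem_filter, Finset.mem_product] at hp
    obtain ⟨⟨hj', huS⟩, hne⟩ := hp
    have hu := Finset.mem_Icc.1 huS
    have hj'u1 : 1 ≤ j' (u + 1) := Nat.one_le_iff_ne_zero.2 hne
    have huS' : u ∈ Finset.Icc 1 (m + 1) := Finset.mem_Icc.2 ⟨hu.1, by omega⟩
    have hu1S' : u + 1 ∈ Finset.Icc 1 (m + 1) := Finset.mem_Icc.2 ⟨by omega, by omega⟩
    have htop' := bump_top_eq_zero hm hu.1 hu.2 hj' hj'u1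
    simp only
    set k := subE (u + 1) j' with hk
    set jj := addE u k with hjjdef
    have hku : k u = j' u := subE_apply_ne (by omega) j'
    have hjju : jj u = j' u + 1 := by rw [hjjdef, addE_apply_self, hku]
    have hjju1 : 1 ≤ jj u := by omega
    have DD1 : DD (Finset.Icc 1 (m + 1)) j'
        = (j' (u + 1) : ℝ) * ((u + 1).factorial : ℝ) * DD (Finset.Icc 1 (m + 1)) k :=
      DD_subE hu1S' hj'u1
    have DD2 : DD (Finset.Icc 1 (m + 1)) jj
        = ((k u : ℝ) + 1) * (u.factorial : ℝ) * DD (Finset.Icc 1 (m + 1)) k :=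
      DD_addE huS' k
    have DD3 : DD (Finset.Icc 1 (m + 1)) jj = DD (Finset.Icc 1 m) jj := DD_ext htop'
    have P1 : ∏ v ∈ Finset.Icc 1 (m + 1), a v ^ j' v
        = a (u + 1) * ∏ v ∈ Finset.Icc 1 (m + 1), a v ^ k v := by
      conv_lhs => rw [← addE_subE hj'u1]
      rw [prod_addE hu1S']
    have P2 : ∏ v ∈ Finset.Icc 1 (m + 1), a v ^ k v
        = a u ^ (jj u - 1) * ∏ v ∈ (Finset.Icc 1 (m + 1)).erase u, a v ^ jj v := by
      conv_lhs => rw [show k = subE u jj from (subE_addE u k).symm]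
      exact prod_subE huS' hjju1 a
    have P3 : ∏ v ∈ (Finset.Icc 1 (m + 1)).erase u, a v ^ jj v
        = ∏ v ∈ (Finset.Icc 1 m).erase u, a v ^ jj v := prod_erase_ext hu.2 htop' a
    rw [CC, CC, DD1, ← DD3, DD2, P1, P2, P3, hjju, Nat.add_sub_cancel]
    have hd := DD_ne_zero (Finset.Icc 1 (m + 1)) k
    have hjne : (j' (u + 1) : ℝ) ≠ 0 := Nat.cast_ne_zero.2 hne
    have hfu : ((u.factorial : ℝ)) ≠ 0 := Nat.cast_ne_zero.2 u.factorial_ne_zero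
    have hkune : ((k u : ℝ) + 1) ≠ 0 := by positivity
    rw [Nat.factorial_succ u, Nat.factorial_succ m, hku]
    push_cast
    field_simp

lemma W_zero {m : ℕ} (hm : 1 ≤ m) (a : ℕ → ℝ) : W m 0 a = 0 := by
  rw [W, PP_zero hm, Finset.sum_empty]

lemma Bump_gt {m h : ℕ} (hh : m < h) (a : ℕ → ℝ) : Bump m h a = 0 := by
  rw [Bump, PP_gt hh, Finset.sum_empty]

lemma W_rec {m h : ℕ} (hm : 1 ≤ m) (hh : 1 ≤ h) (a : ℕ → ℝ) :
    W (m + 1) h a = a 1 * W m (h - 1) a + Bump m h a := by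
  have hcancel : (m + 1 : ℝ) ≠ 0 := by positivity
  refine mul_left_cancel₀ hcancel ?_
  rw [mul_add, ← X_eq hm hh a, ← Y_eq hm hh a]
  rw [W, Finset.mul_sum, ← Finset.sum_add_distrib]
  refine Finset.sum_congr rfl fun j' hj' => ?_
  obtain ⟨hs, hsupp, hw⟩ := mem_PP.1 hj'
  have key : j' 1 + ∑ u ∈ Finset.Icc 1 m, (u + 1) * j' (u + 1) = m + 1 := by
    conv_rhs => rw [← hw]
    rw [Icc_one_split, Finset.sum_insert (by simp [Finset.mem_Icc]), one_mul,
      sum_shift m (fun v => v * j' v)]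
  have keyR : ((j' 1 : ℕ) : ℝ) + ∑ u ∈ Finset.Icc 1 m, (((u + 1) * j' (u + 1) : ℕ) : ℝ)
      = (m + 1 : ℝ) := by exact_mod_cast key
  rw [← keyR, add_mul, Finset.sum_mul]

lemma PP_one_one : PP 1 1 = {fun v => if v = 1 then 1 else 0} := by
  ext j
  rw [mem_PP, Finset.mem_singleton]
  constructor
  · rintro ⟨hs, hsupp, hw⟩
    simp only [Finset.Icc_self, Finset.sum_singleton] at hs hw
    funext v
    by_cases hv : v = 1
    · subst hv; simp [hs]
    · simp only [if_neg hv]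
      by_contra hne
      have := hsupp v hne
      simp only [Finset.Icc_self, Finset.mem_singleton] at this
      exact hv this
  · rintro rfl
    refine ⟨?_, ?_, ?_⟩
    · simp [Finset.Icc_self]
    · intro v hv
      simp only [ne_eq, ite_eq_right_iff, not_forall] at hv
      simp [Finset.Icc_self, hv.1]
    · simp [Finset.Icc_self]

lemma W_one (a : ℕ → ℝ) : W 1 1 a = a 1 := by
  rw [W, PP_one_one, Finset.sum_singleton, CC, DD]
  norm_num [Finset.Icc_self, Nat.factorial]

theorem core (f g : ℝ → ℝ) (hf : ContDiff ℝ (⊤ : ℕ∞) f) (hg : ContDiff ℝ (⊤ : ℕ∞) g) :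
    ∀ m : ℕ, 1 ≤ m → ∀ x : ℝ, iteratedDeriv m (fun y => f (g y)) x
      = ∑ h ∈ Finset.Icc 1 m,
          iteratedDeriv h f (g x) * W m h (fun v => iteratedDeriv v g x) := by
  have hfd : ∀ h : ℕ, Differentiable ℝ (iteratedDeriv h f) := fun h =>
    hf.differentiable_iteratedDeriv h (by exact_mod_cast lt_top_iff_ne_top.2 (by simp))
  have hgd : ∀ v : ℕ, Differentiable ℝ (iteratedDeriv v g) := fun v =>
    hg.differentiable_iteratedDeriv v (by exact_mod_cast lt_top_iff_ne_top.2 (by simp))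
  have hA : ∀ (v : ℕ) (x : ℝ), HasDerivAt (iteratedDeriv v g) (iteratedDeriv (v + 1) g x) x :=
    fun v x => by simpa [iteratedDeriv_succ] using ((hgd v) x).hasDerivAt
  have hF : ∀ (h : ℕ) (x : ℝ), HasDerivAt (fun y => iteratedDeriv h f (g y))
      (iteratedDeriv (h + 1) f (g x) * iteratedDeriv 1 g x) x := fun h x => by
    have h1 : HasDerivAt (iteratedDeriv h f) (iteratedDeriv (h + 1) f (g x)) (g x) := by
      simpa [iteratedDeriv_succ] using ((hfd h) (g x)).hasDerivAt
    have h2 : HasDerivAt g (iteratedDeriv 1 g x) x := by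
      simpa [iteratedDeriv_one] using
        ((hg.differentiable (by simp)) x).hasDerivAt
    exact h1.comp x h2
  refine Nat.le_induction ?_ ?_
  · -- base case m = 1
    intro x
    rw [Finset.Icc_self, Finset.sum_singleton, W_one]
    simp only [iteratedDeriv_one]
    have h2 : HasDerivAt g (deriv g x) x :=
      ((hg.differentiable (by simp)) x).hasDerivAt
    have h1 : HasDerivAt f (deriv f (g x)) (g x) :=
      ((hf.differentiable (by simp)) (g x)).hasDerivAt
    exact (h1.comp x h2).deriv
  · -- inductive step
    intro n hn IH x
    rw [iteratedDeriv_succ]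
    have hfun : iteratedDeriv n (fun y => f (g y))
        = fun y => ∑ h ∈ Finset.Icc 1 n,
            iteratedDeriv h f (g y) * W n h (fun v => iteratedDeriv v g y) := funext IH
    rw [hfun]
    have hWd : ∀ h : ℕ, HasDerivAt (fun y => W n h (fun v => iteratedDeriv v g y))
        (Bump n h (fun v => iteratedDeriv v g x)) x := fun h => by
      rw [Bump]
      simp only [W]
      refine HasDerivAt.fun_sum fun j _ => ?_
      refine HasDerivAt.const_mul _ ?_
      have hprod := HasDerivAt.fun_finsetProd (u := Finset.Icc 1 n)
        (f := fun v y => (iteratedDeriv v g y) ^ j v)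
        (f' := fun v => (j v : ℝ) * (iteratedDeriv v g x) ^ (j v - 1)
          * iteratedDeriv (v + 1) g x)
        (fun v _ => (hA v x).pow (j v))
      simpa [smul_eq_mul, mul_comm, mul_left_comm, mul_assoc] using hprod
    have hG : HasDerivAt (fun y => ∑ h ∈ Finset.Icc 1 n,
          iteratedDeriv h f (g y) * W n h (fun v => iteratedDeriv v g y))
        (∑ h ∈ Finset.Icc 1 n,
          (iteratedDeriv (h + 1) f (g x) * iteratedDeriv 1 g x
              * W n h (fun v => iteratedDeriv v g x)
            + iteratedDeriv h f (g x) * Bump n h (fun v => iteratedDeriv v g x))) x :=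
      HasDerivAt.fun_sum fun h _ => (hF h x).mul (hWd h)
    rw [hG.deriv]
    have hRHS : ∑ h ∈ Finset.Icc 1 (n + 1),
          iteratedDeriv h f (g x) * W (n + 1) h (fun v => iteratedDeriv v g x)
        = (∑ h ∈ Finset.Icc 1 n, iteratedDeriv (h + 1) f (g x) * iteratedDeriv 1 g x
              * W n h (fun v => iteratedDeriv v g x))
          + ∑ h ∈ Finset.Icc 1 n,
              iteratedDeriv h f (g x) * Bump n h (fun v => iteratedDeriv v g x) := by
      calc ∑ h ∈ Finset.Icc 1 (n + 1),
            iteratedDeriv h f (g x) * W (n + 1) h (fun v => iteratedDeriv v g x)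
          = ∑ h ∈ Finset.Icc 1 (n + 1),
            (iteratedDeriv h f (g x) * ((iteratedDeriv 1 g x)
                * W n (h - 1) (fun v => iteratedDeriv v g x))
              + iteratedDeriv h f (g x) * Bump n h (fun v => iteratedDeriv v g x)) := by
            refine Finset.sum_congr rfl fun h hh => ?_
            rw [W_rec hn (Finset.mem_Icc.1 hh).1, mul_add]
        _ = (∑ h ∈ Finset.Icc 1 (n + 1), iteratedDeriv h f (g x) * ((iteratedDeriv 1 g x)
                * W n (h - 1) (fun v => iteratedDeriv v g x)))
            + ∑ h ∈ Finset.Icc 1 (n + 1),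
                iteratedDeriv h f (g x) * Bump n h (fun v => iteratedDeriv v g x) :=
            Finset.sum_add_distrib
        _ = _ := by
            congr 1
            · rw [Icc_one_split n, Finset.sum_insert (by simp [Finset.mem_Icc])]
              rw [show (1 : ℕ) - 1 = 0 from rfl, W_zero hn, mul_zero, mul_zero, zero_add]
              rw [sum_shift n (fun h => iteratedDeriv h f (g x) * ((iteratedDeriv 1 g x)
                * W n (h - 1) (fun v => iteratedDeriv v g x)))]
              refine Finset.sum_congr rfl fun u _ => ?_
              rw [Nat.add_sub_cancel]
              ring
            · rw [Icc_succ_insert n, Finset.sum_insert (by simp [Finset.mem_Icc])]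
              rw [Bump_gt (by omega), mul_zero, zero_add]
    rw [hRHS, Finset.sum_add_distrib]

theorem stmt_15 (f g : ℝ → ℝ) (hf : ContDiff ℝ (⊤ : ℕ∞) f) (hg : ContDiff ℝ (⊤ : ℕ∞) g)
    (m : ℕ) (hm : 1 ≤ m) (x : ℝ) :
    iteratedDeriv m (fun y => f (g y)) x =
      ∑ h ∈ Finset.Icc 1 m,
        iteratedDeriv h f (g x) * Bell m h (fun i => iteratedDeriv i g x) := by
  rw [core f g hf hg m hm x]
  refine Finset.sum_congr rfl fun h hh => ?_
  have hhm := Finset.mem_Icc.1 hh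
  rw [Bell_eq_W hhm.1 hhm.2]
end
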